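/- arXiv:math/0504050 — 8 statements merged into one kernel-verified Lean document; each statement's English description precedes it below -/
import Mathlib

section
/- Let F : ℝ^{2+2p} → ℝ be smooth. Consider the ODE system on ℝ^{6+4p} with coordinates (x, s, x*, s*): ẍ = 0, s̈_i = 0, ẍ* = 2ẋ Σ_i ṡ_i ∂_{s_i}F(s), s̈*_i = -ẋ² ∂_{s_i}F(s). For any initial position (α, ξ, α*, ξ*) and velocity (β, η, β*, η*), the curve γ(t) = (α+βt, ξ+tη, α*+β*t+2β∫₀ᵗ∫₀^τ Σ_i η_i ∂_{s_i}F(ξ+ση) dσ dτ, ξ*_i+tη*_i-β²∫₀ᵗ∫₀^τ ∂_{s_i}F(ξ+ση) dσ dτ) solves the system for all t ∈ ℝ with the given initial conditions. -/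
open intervalIntegral

/-- Partial derivative ∂_{s_i}F of a function on ℝ^{2+2p}. -/
noncomputable def pdS {n : ℕ} (i : Fin n) (F : (Fin n → ℝ) → ℝ) (s : Fin n → ℝ) : ℝ :=
  fderiv ℝ F s (Pi.single i 1)

lemma pdS_cont {n : ℕ} (i : Fin n) (F : (Fin n → ℝ) → ℝ) (hF : ContDiff ℝ (⊤ : ℕ∞) F)
    (ξ η : Fin n → ℝ) :
    Continuous (fun σ : ℝ => pdS i F (fun j => ξ j + σ * η j)) := by
  have h1 : Continuous (fun s : Fin n → ℝ => fderiv ℝ F s (Pi.single i 1)) :=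
    (hF.continuous_fderiv (by simp)).clm_apply continuous_const
  exact h1.comp (continuous_pi fun j =>
    continuous_const.add (continuous_id.mul continuous_const))

/-- Primitive of a continuous function has derivative everywhere. -/
lemma prim_hasDerivAt {h : ℝ → ℝ} (hc : Continuous h) (t : ℝ) :
    HasDerivAt (fun u => ∫ σ in (0:ℝ)..u, h σ) (h t) t :=
  (hc.integral_hasStrictDerivAt 0 t).hasDerivAt

lemma prim_continuous {h : ℝ → ℝ} (hc : Continuous h) :
    Continuous (fun u => ∫ σ in (0:ℝ)..u, h σ) :=
  intervalIntegral.continuous_primitive (fun a b => hc.intervalIntegrable a b) 0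

/-- Double primitive has derivative everywhere. -/
lemma dprim_hasDerivAt {h : ℝ → ℝ} (hc : Continuous h) (t : ℝ) :
    HasDerivAt (fun u => ∫ τ in (0:ℝ)..u, ∫ σ in (0:ℝ)..τ, h σ)
      (∫ σ in (0:ℝ)..t, h σ) t :=
  ((prim_continuous hc).integral_hasStrictDerivAt 0 t).hasDerivAt

/-- the explicit curve γ(t) solves the geodesic ODE system
    ẍ = 0, s̈_i = 0, ẍ* = 2 ẋ Σ_i ṡ_i ∂_{s_i}F(s), s̈*_i = -ẋ² ∂_{s_i}F(s)
    for all time, with the prescribed initial position and velocity. -/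
theorem stmt_0 (p : ℕ) (F : (Fin (2+2*p) → ℝ) → ℝ) (hF : ContDiff ℝ (⊤ : ℕ∞) F)
    (α β αs βs : ℝ) (ξ η ξs ηs : Fin (2+2*p) → ℝ) :
    let X : ℝ → ℝ := fun t => α + β * t
    let S : ℝ → Fin (2+2*p) → ℝ := fun t i => ξ i + t * η i
    let Xs : ℝ → ℝ := fun t => αs + βs * t +
      2 * β * ∫ τ in (0:ℝ)..t, ∫ σ in (0:ℝ)..τ,
        ∑ i : Fin (2+2*p), η i * pdS i F (fun j => ξ j + σ * η j)
    let Ss : Fin (2+2*p) → ℝ → ℝ := fun i t => ξs i + t * ηs i -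
      β^2 * ∫ τ in (0:ℝ)..t, ∫ σ in (0:ℝ)..τ, pdS i F (fun j => ξ j + σ * η j)
    -- the geodesic equations hold for all t ∈ ℝ
    (∀ t : ℝ, deriv (deriv X) t = 0)
    ∧ (∀ (t : ℝ) (i : Fin (2+2*p)), deriv (deriv (fun u => S u i)) t = 0)
    ∧ (∀ t : ℝ, deriv (deriv Xs) t
        = 2 * deriv X t * ∑ i : Fin (2+2*p), deriv (fun u => S u i) t * pdS i F (S t))
    ∧ (∀ (t : ℝ) (i : Fin (2+2*p)), deriv (deriv (Ss i)) t
        = -(deriv X t)^2 * pdS i F (S t))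
    -- with the given initial conditions
    ∧ X 0 = α ∧ deriv X 0 = β
    ∧ (∀ i, S 0 i = ξ i) ∧ (∀ i, deriv (fun u => S u i) 0 = η i)
    ∧ Xs 0 = αs ∧ deriv Xs 0 = βs
    ∧ (∀ i, Ss i 0 = ξs i) ∧ (∀ i, deriv (Ss i) 0 = ηs i) := by
  intro X S Xs Ss
  have hg : ∀ i : Fin (2+2*p), Continuous (fun σ : ℝ => pdS i F (fun j => ξ j + σ * η j)) :=
    fun i => pdS_cont i F hF ξ η
  have hG : Continuous (fun σ : ℝ => ∑ i : Fin (2+2*p),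
      η i * pdS i F (fun j => ξ j + σ * η j)) :=
    continuous_finset_sum _ fun i _ => continuous_const.mul (hg i)
  have hX : ∀ t, HasDerivAt X β t := fun t => by
    show HasDerivAt (fun t => α + β * t) β t
    simpa using ((hasDerivAt_id t).const_mul β).const_add α
  have hX' : deriv X = fun _ => β := funext fun t => (hX t).deriv
  have hS : ∀ (i : Fin (2+2*p)) t, HasDerivAt (fun u => S u i) (η i) t := fun i t => by
    show HasDerivAt (fun u => ξ i + u * η i) (η i) t
    simpa using ((hasDerivAt_id t).mul_const (η i)).const_add (ξ i)
  have hS' : ∀ i : Fin (2+2*p), deriv (fun u => S u i) = fun _ => η i :=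
    fun i => funext fun t => (hS i t).deriv
  have hXs : ∀ t, HasDerivAt Xs
      (βs + 2 * β * ∫ σ in (0:ℝ)..t, ∑ i : Fin (2+2*p),
        η i * pdS i F (fun j => ξ j + σ * η j)) t := fun t => by
    show HasDerivAt (fun t => αs + βs * t +
      2 * β * ∫ τ in (0:ℝ)..t, ∫ σ in (0:ℝ)..τ,
        ∑ i : Fin (2+2*p), η i * pdS i F (fun j => ξ j + σ * η j)) _ t
    have h1 : HasDerivAt (fun t : ℝ => αs + βs * t) βs t := by
      simpa using ((hasDerivAt_id t).const_mul βs).const_add αs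
    exact h1.add ((dprim_hasDerivAt hG t).const_mul (2 * β))
  have hXs' : deriv Xs = fun t => βs + 2 * β * ∫ σ in (0:ℝ)..t, ∑ i : Fin (2+2*p),
      η i * pdS i F (fun j => ξ j + σ * η j) := funext fun t => (hXs t).deriv
  have hXs2 : ∀ t, deriv (deriv Xs) t
      = 2 * β * ∑ i : Fin (2+2*p), η i * pdS i F (fun j => ξ j + t * η j) := by
    intro t
    rw [hXs']
    exact (((prim_hasDerivAt hG t).const_mul (2 * β)).const_add βs).deriv
  have hSs : ∀ (i : Fin (2+2*p)) t, HasDerivAt (Ss i)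
      (ηs i - β^2 * ∫ σ in (0:ℝ)..t, pdS i F (fun j => ξ j + σ * η j)) t := by
    intro i t
    show HasDerivAt (fun t => ξs i + t * ηs i -
      β^2 * ∫ τ in (0:ℝ)..t, ∫ σ in (0:ℝ)..τ, pdS i F (fun j => ξ j + σ * η j)) _ t
    have h1 : HasDerivAt (fun t : ℝ => ξs i + t * ηs i) (ηs i) t := by
      simpa using ((hasDerivAt_id t).mul_const (ηs i)).const_add (ξs i)
    exact h1.sub ((dprim_hasDerivAt (hg i) t).const_mul (β^2))
  have hSs' : ∀ i : Fin (2+2*p), deriv (Ss i) = fun t => ηs i -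
      β^2 * ∫ σ in (0:ℝ)..t, pdS i F (fun j => ξ j + σ * η j) :=
    fun i => funext fun t => (hSs i t).deriv
  have hSs2 : ∀ (i : Fin (2+2*p)) t, deriv (deriv (Ss i)) t
      = -(β^2 * pdS i F (fun j => ξ j + t * η j)) := by
    intro i t
    rw [hSs' i]
    have : HasDerivAt (fun t : ℝ => ηs i -
        β^2 * ∫ σ in (0:ℝ)..t, pdS i F (fun j => ξ j + σ * η j))
        (0 - β^2 * pdS i F (fun j => ξ j + t * η j)) t :=
      (hasDerivAt_const t (ηs i)).sub ((prim_hasDerivAt (hg i) t).const_mul (β^2))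
    simpa using this.deriv
  have hSt : ∀ t : ℝ, S t = fun j => ξ j + t * η j := fun t => rfl
  refine ⟨?_, ?_, ?_, ?_, ?_, ?_, ?_, ?_, ?_, ?_, ?_, ?_⟩
  · intro t; rw [hX']; simp
  · intro t i; rw [hS' i]; simp
  · intro t
    rw [hXs2 t, hX', hSt t]
    simp only [hS']
  · intro t i
    rw [hSs2 i t, hX', hSt t]
    ring
  · show α + β * 0 = α; ring
  · rw [hX']
  · intro i; show ξ i + 0 * η i = ξ i; ring
  · intro i; rw [hS' i]
  · show αs + βs * 0 + 2 * β * _ = αs; simp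
  · rw [hXs']; simp
  · intro i; show ξs i + 0 * ηs i - β^2 * _ = ξs i; simp
  · intro i; rw [hSs' i]; simp
end

section
/- If an n-dimensional vector space V with nondegenerate symmetric bilinear form ⟨·,·⟩ carries a 4-tensor A⁰ supported on a totally isotropic subspace spanned by X, Z_0,…,Z_p, Z̃_0,…,Z̃_p with A⁰(X,Z_i,Z̃_i,X) = 1 (0 ≤ i ≤ p, all other components determined by curvature symmetries), where ⟨X,X*⟩ = ⟨Z_i,Z*_i⟩ = ⟨Z̃_i,Z̃*_i⟩ = 1 defines a hyperbolic basis of V = ℝ^{6+4p} with p ≥ 1, then there is no nontrivial orthogonal direct sum decomposition V = V₁ ⊕ V₂ with A⁰ = A⁰₁ ⊕ A⁰₂ and ⟨·,·⟩ = ⟨·,·⟩₁ ⊕ ⟨·,·⟩₂. -/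
/-- Basis index set for ℝ^{6+4p}: `false` = ordinary vectors (X, Z_i, Z̃_i),
    `true` = dual vectors (X*, Z*_i, Z̃*_i). -/
abbrev K (p : ℕ) := Bool × (Unit ⊕ Fin (p+1) ⊕ Fin (p+1))

def kX (p : ℕ) : K p := (false, Sum.inl ())
def kZ (p : ℕ) (i : Fin (p+1)) : K p := (false, Sum.inr (Sum.inl i))
def kZt (p : ℕ) (i : Fin (p+1)) : K p := (false, Sum.inr (Sum.inr i))

/-- The hyperbolic inner product pairing each basis vector with its dual:
    ⟨X,X*⟩ = ⟨Z_i,Z*_i⟩ = ⟨Z̃_i,Z̃*_i⟩ = 1. -/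
def B (p : ℕ) (u v : K p → ℝ) : ℝ :=
  ∑ j : Unit ⊕ Fin (p+1) ⊕ Fin (p+1), (u (false, j) * v (true, j) + u (true, j) * v (false, j))

/-- The algebraic curvature tensor A⁰ with A⁰(X,Z_i,Z̃_i,X) = 1 (0 ≤ i ≤ p), all other
    components being determined by the curvature symmetries; it is supported on the
    totally isotropic span of {X, Z_i, Z̃_i}. -/
def A0 (p : ℕ) (u v w t : K p → ℝ) : ℝ :=
  ∑ i : Fin (p+1),
    ((u (kX p) * v (kZ p i) - u (kZ p i) * v (kX p)) *
      (w (kZt p i) * t (kX p) - w (kX p) * t (kZt p i))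
     + (u (kZt p i) * v (kX p) - u (kX p) * v (kZt p i)) *
      (w (kX p) * t (kZ p i) - w (kZ p i) * t (kX p)))

/-!
Let `V = V₁ ⊕ V₂` be such a decomposition. Since `A⁰` has no mixed components, for `a ∈ V₁`,
`b ∈ V₂` the isotropic parts satisfy `a(X) b(Y) = a(Y) b(X)` for every `Y ∈ {X, Z_i, Z̃_i}`.
If `X` vanishes on all of `V₂`, these relations (applied to the `V₁`-component of `X`) kill the
isotropic part of `V₂`; then `V₂` is orthogonal to itself and to `V₁`, so `V₂ = 0` by
nondegeneracy. Symmetrically for `V₁`. Otherwise some `a ∈ V₁`, `b ∈ V₂` have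
`a(X) b(X) ≠ 0`, and splitting `Z₀` along `V₁ ⊕ V₂` contradicts the relations.
-/

section Proportional

variable {ι R : Type*} [DecidableEq ι] [CommRing R] {V₁ V₂ : Submodule R (ι → R)} {k l : ι}

theorem forall_apply_eq_zero_of_proportional (hsup : V₁ ⊔ V₂ = ⊤)
    (hrel : ∀ a ∈ V₁, ∀ b ∈ V₂, a k * b l = a l * b k) (hk : ∀ b ∈ V₂, b k = 0) :
    ∀ b ∈ V₂, b l = 0 := by
  obtain ⟨a₀, ha₀, b₀, hb₀, hab₀⟩ :=
    Submodule.mem_sup.mp (hsup ▸ Submodule.mem_top : Pi.single k 1 ∈ V₁ ⊔ V₂)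
  have ha₀k : a₀ k = 1 := by
    simpa [hk b₀ hb₀] using congrFun hab₀ k
  intro b hb
  simpa [ha₀k, hk b hb] using hrel a₀ ha₀ b hb

theorem apply_mul_apply_eq_zero_of_proportional (hsup : V₁ ⊔ V₂ = ⊤) (hkl : k ≠ l)
    (hrel : ∀ a ∈ V₁, ∀ b ∈ V₂, a k * b l = a l * b k) {a b : ι → R} (ha : a ∈ V₁)
    (hb : b ∈ V₂) : a k * b k = 0 := by
  obtain ⟨u₁, hu₁, u₂, hu₂, hu⟩ :=
    Submodule.mem_sup.mp (hsup ▸ Submodule.mem_top : Pi.single l 1 ∈ V₁ ⊔ V₂)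
  have hul : u₁ l + u₂ l = 1 := by simpa using congrFun hu l
  have huk : u₁ k + u₂ k = 0 := by simpa [hkl] using congrFun hu k
  linear_combination -(a k * b k) * hul + (a l * b k) * huk - a k * hrel u₁ hu₁ b hb
    + u₁ k * hrel a ha b hb + b k * hrel a ha u₂ hu₂

end Proportional

section Metric

variable {p : ℕ}

theorem B_comm (u v : K p → ℝ) : B p u v = B p v u :=
  Finset.sum_congr rfl fun _ _ => by ring

theorem B_add_left (u v w : K p → ℝ) : B p (u + v) w = B p u w + B p v w := by
  simp only [B, ← Finset.sum_add_distrib, Pi.add_apply]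
  exact Finset.sum_congr rfl fun _ _ => by ring

theorem B_single_false_left (j : Unit ⊕ Fin (p+1) ⊕ Fin (p+1)) (v : K p → ℝ) :
    B p (Pi.single (false, j) 1) v = v (true, j) := by
  simp [B, Pi.single_apply]

theorem B_eq_zero_of_apply_false_eq_zero {u v : K p → ℝ} (hu : ∀ j, u (false, j) = 0)
    (hv : ∀ j, v (false, j) = 0) : B p u v = 0 := by
  simp [B, hu, hv]

/-- The span of `X*, Z*_i, Z̃*_i` is totally isotropic, so a summand lying in it is orthogonal
to everything. -/
theorem eq_bot_of_forall_apply_false_eq_zero {V₁ V₂ : Submodule ℝ (K p → ℝ)}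
    (hsup : V₁ ⊔ V₂ = ⊤) (hB : ∀ u ∈ V₁, ∀ v ∈ V₂, B p u v = 0)
    (hV₂ : ∀ v ∈ V₂, ∀ j, v (false, j) = 0) : V₂ = ⊥ := by
  refine (Submodule.eq_bot_iff _).mpr fun v hv => funext fun ⟨s, j⟩ => ?_
  cases s
  · exact hV₂ v hv j
  · obtain ⟨w₁, hw₁, w₂, hw₂, hw⟩ :=
      Submodule.mem_sup.mp (hsup ▸ Submodule.mem_top : Pi.single (false, j) 1 ∈ V₁ ⊔ V₂)
    rw [Pi.zero_apply, ← B_single_false_left j v, ← hw, B_add_left, hB w₁ hw₁ v hv,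
      B_eq_zero_of_apply_false_eq_zero (hV₂ w₂ hw₂) (hV₂ v hv), add_zero]

end Metric

section Curvature

variable {p : ℕ}

theorem A0_add_third (u v w w' t : K p → ℝ) :
    A0 p u v (w + w') t = A0 p u v w t + A0 p u v w' t := by
  simp only [A0, ← Finset.sum_add_distrib, Pi.add_apply]
  exact Finset.sum_congr rfl fun _ _ => by ring

theorem A0_add_fourth (u v w t t' : K p → ℝ) :
    A0 p u v w (t + t') = A0 p u v w t + A0 p u v w t' := by
  simp only [A0, ← Finset.sum_add_distrib, Pi.add_apply]
  exact Finset.sum_congr rfl fun _ _ => by ring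

@[simp] theorem A0_zero_first (v w t : K p → ℝ) : A0 p 0 v w t = 0 := by simp [A0]

@[simp] theorem A0_zero_second (u w t : K p → ℝ) : A0 p u 0 w t = 0 := by simp [A0]

theorem A0_single_kZt_single_kX (u v : K p → ℝ) (i : Fin (p+1)) :
    A0 p u v (Pi.single (kZt p i) 1) (Pi.single (kX p) 1) =
      u (kX p) * v (kZ p i) - u (kZ p i) * v (kX p) := by
  simp [A0, kX, kZ, kZt, Pi.single_apply]

theorem A0_single_kX_single_kZ (u v : K p → ℝ) (i : Fin (p+1)) :
    A0 p u v (Pi.single (kX p) 1) (Pi.single (kZ p i) 1) =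
      u (kZt p i) * v (kX p) - u (kX p) * v (kZt p i) := by
  simp [A0, kX, kZ, kZt, Pi.single_apply]

theorem A0_eq_zero_of_mem_of_mem {V₁ V₂ : Submodule ℝ (K p → ℝ)} (hc : IsCompl V₁ V₂)
    (hA : ∀ a b c d : K p → ℝ,
      (a ∈ V₁ ∨ a ∈ V₂) → (b ∈ V₁ ∨ b ∈ V₂) → (c ∈ V₁ ∨ c ∈ V₂) → (d ∈ V₁ ∨ d ∈ V₂) →
      ¬(a ∈ V₁ ∧ b ∈ V₁ ∧ c ∈ V₁ ∧ d ∈ V₁) → ¬(a ∈ V₂ ∧ b ∈ V₂ ∧ c ∈ V₂ ∧ d ∈ V₂) →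
      A0 p a b c d = 0)
    {a b : K p → ℝ} (ha : a ∈ V₁) (hb : b ∈ V₂) (c d : K p → ℝ) : A0 p a b c d = 0 := by
  have hsplit : ∀ c d : K p → ℝ, (c ∈ V₁ ∨ c ∈ V₂) → (d ∈ V₁ ∨ d ∈ V₂) → A0 p a b c d = 0 := by
    intro c d hc' hd'
    by_cases ha₂ : a ∈ V₂
    · simp [Submodule.disjoint_def.mp hc.disjoint a ha ha₂]
    by_cases hb₁ : b ∈ V₁
    · simp [Submodule.disjoint_def.mp hc.disjoint b hb₁ hb]
    exact hA a b c d (.inl ha) (.inr hb) hc' hd' (fun h => hb₁ h.2.1) (fun h => ha₂ h.1)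
  obtain ⟨c₁, hc₁, c₂, hc₂, rfl⟩ :=
    Submodule.mem_sup.mp (hc.sup_eq_top ▸ Submodule.mem_top : c ∈ V₁ ⊔ V₂)
  obtain ⟨d₁, hd₁, d₂, hd₂, rfl⟩ :=
    Submodule.mem_sup.mp (hc.sup_eq_top ▸ Submodule.mem_top : d ∈ V₁ ⊔ V₂)
  simp only [A0_add_third, A0_add_fourth, hsplit _ _ (.inl hc₁) (.inl hd₁),
    hsplit _ _ (.inl hc₁) (.inr hd₂), hsplit _ _ (.inr hc₂) (.inl hd₁),
    hsplit _ _ (.inr hc₂) (.inr hd₂), add_zero]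

theorem apply_kX_mul_eq_of_A0_eq_zero {u v : K p → ℝ} (huv : ∀ c d, A0 p u v c d = 0)
    (j : Unit ⊕ Fin (p+1) ⊕ Fin (p+1)) :
    u (kX p) * v (false, j) = u (false, j) * v (kX p) := by
  rcases j with ⟨⟩ | i | i
  · rfl
  · have := huv (Pi.single (kZt p i) 1) (Pi.single (kX p) 1)
    rw [A0_single_kZt_single_kX] at this
    exact sub_eq_zero.mp this
  · have := huv (Pi.single (kX p) 1) (Pi.single (kZ p i) 1)
    rw [A0_single_kX_single_kZ] at this
    exact (sub_eq_zero.mp this).symm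

end Curvature

theorem stmt_4_general (p : ℕ) :
    ¬ ∃ V₁ V₂ : Submodule ℝ (K p → ℝ),
        V₁ ≠ ⊥ ∧ V₂ ≠ ⊥ ∧ IsCompl V₁ V₂
        ∧ (∀ u ∈ V₁, ∀ v ∈ V₂, B p u v = 0)
        ∧ (∀ a b c d : K p → ℝ,
            (a ∈ V₁ ∨ a ∈ V₂) → (b ∈ V₁ ∨ b ∈ V₂) → (c ∈ V₁ ∨ c ∈ V₂) → (d ∈ V₁ ∨ d ∈ V₂) →
            ¬(a ∈ V₁ ∧ b ∈ V₁ ∧ c ∈ V₁ ∧ d ∈ V₁) →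
            ¬(a ∈ V₂ ∧ b ∈ V₂ ∧ c ∈ V₂ ∧ d ∈ V₂) →
            A0 p a b c d = 0) := by
  rintro ⟨V₁, V₂, hV₁, hV₂, hc, hB, hA⟩
  have hrel (j) : ∀ a ∈ V₁, ∀ b ∈ V₂, a (kX p) * b (false, j) = a (false, j) * b (kX p) :=
    fun a ha b hb => apply_kX_mul_eq_of_A0_eq_zero (A0_eq_zero_of_mem_of_mem hc hA ha hb) j
  by_cases hX₂ : ∀ b ∈ V₂, b (kX p) = 0
  · refine hV₂ (eq_bot_of_forall_apply_false_eq_zero hc.sup_eq_top hB fun b hb j => ?_)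
    exact forall_apply_eq_zero_of_proportional hc.sup_eq_top (hrel j) hX₂ b hb
  by_cases hX₁ : ∀ a ∈ V₁, a (kX p) = 0
  · refine hV₁ (eq_bot_of_forall_apply_false_eq_zero hc.symm.sup_eq_top
      (fun u hu v hv => B_comm u v ▸ hB v hv u hu) fun a ha j => ?_)
    exact forall_apply_eq_zero_of_proportional hc.symm.sup_eq_top
      (fun b hb a ha => by linear_combination -hrel j a ha b hb) hX₁ a ha
  push Not at hX₁ hX₂
  obtain ⟨a, ha, haX⟩ := hX₁
  obtain ⟨b, hb, hbX⟩ := hX₂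
  exact mul_ne_zero haX hbX <| apply_mul_apply_eq_zero_of_proportional (l := kZ p 0)
    hc.sup_eq_top (by simp [kX, kZ]) (hrel _) ha hb

/-- for p ≥ 1 there is no nontrivial orthogonal direct sum decomposition
    ℝ^{6+4p} = V₁ ⊕ V₂ with ⟨·,·⟩ = ⟨·,·⟩₁ ⊕ ⟨·,·⟩₂ and A⁰ = A⁰₁ ⊕ A⁰₂
    (the 0-model 𝔐⁰_{6+4p} is indecomposable). -/
theorem stmt_4 (p : ℕ) (hp : 1 ≤ p) :
    ¬ ∃ V₁ V₂ : Submodule ℝ (K p → ℝ),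
        V₁ ≠ ⊥ ∧ V₂ ≠ ⊥ ∧ IsCompl V₁ V₂
        ∧ (∀ u ∈ V₁, ∀ v ∈ V₂, B p u v = 0)
        ∧ (∀ a b c d : K p → ℝ,
            (a ∈ V₁ ∨ a ∈ V₂) → (b ∈ V₁ ∨ b ∈ V₂) → (c ∈ V₁ ∨ c ∈ V₂) → (d ∈ V₁ ∨ d ∈ V₂) →
            ¬(a ∈ V₁ ∧ b ∈ V₁ ∧ c ∈ V₁ ∧ d ∈ V₁) →
            ¬(a ∈ V₂ ∧ b ∈ V₂ ∧ c ∈ V₂ ∧ d ∈ V₂) →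
            A0 p a b c d = 0) :=
  stmt_4_general p
end

section
/- In the indecomposability argument: suppose ℝ^{6+4p} = V₁ ⊕ V₂ is an orthogonal decomposition preserving A⁰, with π_i the projections, and suppose ⟨π₁X, X*⟩ ≠ 0. Set α = π₁(X). Then every β ∈ (X*)^⊥ ∩ V₂ satisfies ⟨β,X*⟩ = ⟨β,Z*_i⟩ = ⟨β,Z̃*_i⟩ = 0 for all i, hence lies in Span{X*, Z*_0,…,Z*_p, Z̃*_0,…,Z̃*_p}, so (X*)^⊥ ∩ V₂ is totally isotropic. -/
lemma B_single_X (p : ℕ) (u : K p → ℝ) :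
    B p u (Pi.single ((true, Sum.inl ()) : K p) 1) = u (false, Sum.inl ()) := by
  simp [B, Pi.single_apply, Prod.ext_iff]

lemma A0_add2 (p : ℕ) (a b b' c d : K p → ℝ) :
    A0 p a (b + b') c d = A0 p a b c d + A0 p a b' c d := by
  simp only [A0, Pi.add_apply, ← Finset.sum_add_distrib]
  exact Finset.sum_congr rfl fun _ _ => by ring

lemma A0_single_Z (p : ℕ) (i : Fin (p+1)) (α β : K p → ℝ) (hβ : β (kX p) = 0) :
    A0 p α (Pi.single (kZ p i) 1) β α = α (kX p) * α (kX p) * β (kZt p i) := by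
  have hβ' : β (false, Sum.inl ()) = 0 := hβ
  unfold A0
  rw [Finset.sum_eq_single i]
  · simp [Pi.single_apply, kX, kZ, kZt, hβ']; ring
  · intro k _ hk
    simp [Pi.single_apply, kX, kZ, kZt, hk]
  · simp

lemma A0_single_Zt (p : ℕ) (i : Fin (p+1)) (α β : K p → ℝ) (hβ : β (kX p) = 0) :
    A0 p α (Pi.single (kZt p i) 1) β α = α (kX p) * α (kX p) * β (kZ p i) := by
  have hβ' : β (false, Sum.inl ()) = 0 := hβ
  unfold A0
  rw [Finset.sum_eq_single i]
  · simp [Pi.single_apply, kX, kZ, kZt, hβ']; ring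
  · intro k _ hk
    simp [Pi.single_apply, kX, kZ, kZt, hk]
  · simp

/-- in the indecomposability argument, if ℝ^{6+4p} = V₁ ⊕ V₂ is an
    orthogonal decomposition preserving A⁰, with α = π₁(X) satisfying ⟨α,X*⟩ ≠ 0,
    then every β ∈ (X*)^⊥ ∩ V₂ has all its ordinary coordinates (the ⟨·,X*⟩-, ⟨·,Z*_i⟩-
    and ⟨·,Z̃*_i⟩-components) zero, hence lies in Span{X*,Z*_0,…,Z*_p,Z̃*_0,…,Z̃*_p};
    in particular (X*)^⊥ ∩ V₂ is totally isotropic. -/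
theorem stmt_5 (p : ℕ) (V₁ V₂ : Submodule ℝ (K p → ℝ))
    (hcompl : IsCompl V₁ V₂)
    (horth : ∀ u ∈ V₁, ∀ v ∈ V₂, B p u v = 0)
    (hA : ∀ a b c d : K p → ℝ,
      (a ∈ V₁ ∨ a ∈ V₂) → (b ∈ V₁ ∨ b ∈ V₂) → (c ∈ V₁ ∨ c ∈ V₂) → (d ∈ V₁ ∨ d ∈ V₂) →
      ¬(a ∈ V₁ ∧ b ∈ V₁ ∧ c ∈ V₁ ∧ d ∈ V₁) →
      ¬(a ∈ V₂ ∧ b ∈ V₂ ∧ c ∈ V₂ ∧ d ∈ V₂) →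
      A0 p a b c d = 0)
    (α : K p → ℝ) (hα₁ : α ∈ V₁) (hα₂ : Pi.single (kX p) 1 - α ∈ V₂)
    (hαX : B p α (Pi.single ((true, Sum.inl ()) : K p) 1) ≠ 0) :
    (∀ β ∈ V₂, B p β (Pi.single ((true, Sum.inl ()) : K p) 1) = 0 →
      ∀ j : Unit ⊕ Fin (p+1) ⊕ Fin (p+1), β (false, j) = 0)
    ∧ (∀ β ∈ V₂, ∀ β' ∈ V₂,
        B p β (Pi.single ((true, Sum.inl ()) : K p) 1) = 0 →
        B p β' (Pi.single ((true, Sum.inl ()) : K p) 1) = 0 →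
        B p β β' = 0) := by
  rw [B_single_X] at hαX
  have hαX' : α (kX p) ≠ 0 := hαX
  have hα2 : α ∉ V₂ := by
    intro h
    exact hαX' (by
      have h0 := Submodule.disjoint_def.mp hcompl.disjoint α hα₁ h
      simp [h0])
  have key : ∀ β ∈ V₂, β (kX p) = 0 → ∀ j, β (false, j) = 0 := by
    intro β hβ hβX j
    by_cases hβ1 : β ∈ V₁
    · have h0 := Submodule.disjoint_def.mp hcompl.disjoint β hβ1 hβ
      simp [h0]
    have hzero : ∀ v : K p → ℝ, A0 p α v β α = 0 := by
      intro v
      have hv : v ∈ V₁ ⊔ V₂ := by rw [hcompl.sup_eq_top]; trivial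
      obtain ⟨z₁, hz₁, z₂, hz₂, hsum⟩ := Submodule.mem_sup.mp hv
      have h1 : A0 p α z₁ β α = 0 :=
        hA α z₁ β α (Or.inl hα₁) (Or.inl hz₁) (Or.inr hβ) (Or.inl hα₁)
          (fun h => hβ1 h.2.2.1) (fun h => hα2 h.1)
      have h2 : A0 p α z₂ β α = 0 :=
        hA α z₂ β α (Or.inl hα₁) (Or.inr hz₂) (Or.inr hβ) (Or.inl hα₁)
          (fun h => hβ1 h.2.2.1) (fun h => hα2 h.1)
      rw [← hsum, A0_add2, h1, h2, add_zero]
    rcases j with u | i | i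
    · cases u; exact hβX
    · have h := hzero (Pi.single (kZt p i) 1)
      rw [A0_single_Zt p i α β hβX] at h
      exact (by simpa [mul_eq_zero, hαX'] using h : β (kZ p i) = 0)
    · have h := hzero (Pi.single (kZ p i) 1)
      rw [A0_single_Z p i α β hβX] at h
      exact (by simpa [mul_eq_zero, hαX'] using h : β (kZt p i) = 0)
  refine ⟨fun β hβ hβB => key β hβ (by rwa [B_single_X] at hβB), ?_⟩
  intro β hβ β' hβ' h h'
  have h1 := key β hβ (by rwa [B_single_X] at h)
  have h2 := key β' hβ' (by rwa [B_single_X] at h')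
  simp [B, h1, h2]
end

section
/- Let h : ℝ → ℝ be smooth, everywhere positive, with h' everywhere positive, and suppose h''·h = k·(h')² for a constant k ∈ ℝ at every point. If k = 1 then h(z) = a·e^{bz} for some constants a > 0 and b > 0. If k ≠ 1, then h(z) = a(z+b)^{1/(1-k)} on its domain, which cannot be everywhere defined, positive, and smooth on all of ℝ; hence necessarily k = 1 and h is a positive multiple of an exponential. -/
lemma myconst (f : ℝ → ℝ) (H : ∀ x, HasDerivAt f 0 x) : ∀ x, f x = f 0 :=
  fun x => is_const_of_deriv_eq_zero (fun y => (H y).differentiableAt)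
    (fun y => (H y).deriv) x 0

/-- if h is smooth with h > 0 and h' > 0 everywhere and h''h = k(h')²
    for a constant k, then (the case k ≠ 1 being impossible on all of ℝ) necessarily
    k = 1 and h(z) = a·e^{bz} with a > 0, b > 0. -/
theorem stmt_9 (h : ℝ → ℝ) (k : ℝ) (hsm : ContDiff ℝ (⊤ : ℕ∞) h)
    (hpos : ∀ z, 0 < h z) (hpos' : ∀ z, 0 < deriv h z)
    (hode : ∀ z, deriv (deriv h) z * h z = k * (deriv h z) ^ 2) :
    k = 1 ∧ ∃ a > (0:ℝ), ∃ b > (0:ℝ), ∀ z, h z = a * Real.exp (b * z) := by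
  have hsm' : ContDiff ℝ ((⊤ : ℕ∞) : WithTop ℕ∞) h := hsm.of_le (by simp)
  have hd : Differentiable ℝ h := hsm'.differentiable (by norm_num)
  have hd2 : Differentiable ℝ (deriv h) :=
    ((contDiff_infty_iff_deriv.mp hsm').2).differentiable (by norm_num)
  have hlog : ∀ x, HasDerivAt (fun z => Real.log (h z)) (deriv h x / h x) x := by
    intro x
    have := (Real.hasDerivAt_log (ne_of_gt (hpos x))).comp x (hd x).hasDerivAt
    rw [div_eq_inv_mul]; exact this
  have hlog' : ∀ x, HasDerivAt (fun z => Real.log (deriv h z))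
      (deriv (deriv h) x / deriv h x) x := by
    intro x
    have := (Real.hasDerivAt_log (ne_of_gt (hpos' x))).comp x (hd2 x).hasDerivAt
    rw [div_eq_inv_mul]; exact this
  have hφc : ∀ x, Real.log (deriv h x) - k * Real.log (h x)
      = Real.log (deriv h 0) - k * Real.log (h 0) := by
    apply myconst
    intro x
    have H := (hlog' x).sub ((hlog x).const_mul k)
    refine H.congr_deriv ?_
    have e1 := hode x
    have hx := (hpos x).ne'
    have hx' := (hpos' x).ne'
    field_simp
    nlinarith [e1]
  by_cases hk : k = 1
  · subst hk
    set b := deriv h 0 / h 0 with hb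
    have hbpos : 0 < b := div_pos (hpos' 0) (hpos 0)
    have hratio : ∀ x, deriv h x = b * h x := by
      intro x
      have e := hφc x
      have : Real.log (deriv h x / h x) = Real.log (deriv h 0 / h 0) := by
        rw [Real.log_div (hpos' x).ne' (hpos x).ne',
            Real.log_div (hpos' 0).ne' (hpos 0).ne']
        linarith
      have e2 : deriv h x / h x = deriv h 0 / h 0 := by
        have := congrArg Real.exp this
        rwa [Real.exp_log (div_pos (hpos' x) (hpos x)),
             Real.exp_log (div_pos (hpos' 0) (hpos 0))] at this
      rw [hb, ← e2]
      exact (div_mul_cancel₀ _ (hpos x).ne').symm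
    refine ⟨rfl, h 0, hpos 0, b, hbpos, ?_⟩
    have hψ : ∀ x, Real.log (h x) - b * x = Real.log (h 0) - b * 0 := by
      apply myconst
      intro x
      have H := (hlog x).sub ((hasDerivAt_id x).const_mul b)
      refine H.congr_deriv ?_
      rw [hratio x]
      field_simp [(hpos x).ne']
      ring
    intro z
    have := hψ z
    have : Real.log (h z) = Real.log (h 0) + b * z := by linarith
    have := congrArg Real.exp this
    rwa [Real.exp_log (hpos z), Real.exp_add, Real.exp_log (hpos 0)] at this
  · exfalso
    set C := Real.log (deriv h 0) - k * Real.log (h 0) with hC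
    set c := Real.exp C with hc
    have hcpos : 0 < c := Real.exp_pos C
    have hder : ∀ x, deriv h x = c * h x ^ k := by
      intro x
      have e := hφc x
      have : Real.log (deriv h x) = C + Real.log (h x) * k := by rw [hC]; linarith
      have := congrArg Real.exp this
      rwa [Real.exp_log (hpos' x), Real.exp_add,
        ← Real.rpow_def_of_pos (hpos x)] at this
    set s := (1 - k) * c with hs
    have hsne : s ≠ 0 := mul_ne_zero (sub_ne_zero.mpr (Ne.symm hk)) hcpos.ne'
    have hu : ∀ x, HasDerivAt (fun z => h z ^ (1 - k)) s x := by
      intro x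
      have hr : HasDerivAt (fun y : ℝ => y ^ (1 - k))
          ((1 - k) * h x ^ (1 - k - 1)) (h x) :=
        Real.hasDerivAt_rpow_const (Or.inl (hpos x).ne')
      have H := hr.comp x (hd x).hasDerivAt
      refine H.congr_deriv ?_
      symm
      rw [hder x, hs]
      have h1 : (1 : ℝ) - k - 1 = -k := by ring
      rw [h1]
      have h2 : h x ^ (-k) * (h x ^ k) = 1 := by
        rw [← Real.rpow_add (hpos x)]
        simp
      calc (1 - k) * c = (1 - k) * (h x ^ (-k) * (h x ^ k)) * c := by rw [h2]; ring
        _ = (1 - k) * h x ^ (-k) * (c * h x ^ k) := by ring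
    have hv : ∀ x, h x ^ (1 - k) - s * x = h 0 ^ (1 - k) - s * 0 := by
      apply myconst
      intro x
      have H := (hu x).sub ((hasDerivAt_id x).const_mul s)
      exact H.congr_deriv (by simp)
    have e := hv (-(h 0 ^ (1 - k)) / s)
    have hz : h (-(h 0 ^ (1 - k)) / s) ^ (1 - k) * s = 0 := by
      rw [mul_div_cancel₀ _ hsne] at e
      have e' : h (-(h 0 ^ (1 - k)) / s) ^ (1 - k) = 0 := by linarith
      rw [e', zero_mul]
    have h0 : h (-(h 0 ^ (1 - k)) / s) ^ (1 - k) = 0 :=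
      (mul_eq_zero.mp hz).resolve_right hsne
    exact absurd h0 (Real.rpow_pos_of_pos (hpos _) _).ne'
end

section
/- Suppose h : ℝ → ℝ is smooth with h > 0 and h' > 0 everywhere, and h''(z)h(z) = k(h'(z))² for all z, where k ≠ 1 is a constant. Then no such h exists defined on all of ℝ. (Equivalently: any maximal solution of this ODE with h, h' > 0 blows up or vanishes at a finite point.) -/
/-- if k ≠ 1, there is no smooth h : ℝ → ℝ with h > 0, h' > 0
    everywhere and h''h = k(h')² on all of ℝ. -/
theorem stmt_11 (h : ℝ → ℝ) (k : ℝ) (hk : k ≠ 1) (hsm : ContDiff ℝ (⊤ : ℕ∞) h)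
    (hpos : ∀ z, 0 < h z) (hpos' : ∀ z, 0 < deriv h z)
    (hode : ∀ z, deriv (deriv h) z * h z = k * (deriv h z) ^ 2) :
    False := by
  have hsm2 : ContDiff ℝ 2 h := hsm.of_le (WithTop.coe_le_coe.2 (le_top : (2 : ℕ∞) ≤ ⊤))
  obtain ⟨hd, hsm'⟩ := contDiff_succ_iff_deriv.1 (by norm_num at hsm2 ⊢; exact hsm2 : ContDiff ℝ (1+1) h)
  have hd' : Differentiable ℝ (deriv h) := hsm'.2.differentiable one_ne_zero
  have hh : ∀ z, HasDerivAt h (deriv h z) z := fun z => (hd z).hasDerivAt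
  have hh' : ∀ z, HasDerivAt (deriv h) (deriv (deriv h) z) z :=
    fun z => (hd' z).hasDerivAt
  set g : ℝ → ℝ := fun z => deriv h z * (h z) ^ (-k) with hg
  -- g has derivative 0 everywhere
  have hgd : ∀ z, HasDerivAt g 0 z := by
    intro z
    have hr : HasDerivAt (fun z => (h z) ^ (-k))
        (deriv h z * (-k) * (h z) ^ (-k - 1)) z :=
      (hh z).rpow_const (Or.inl (hpos z).ne')
    have := (hh' z).mul hr
    refine this.congr_deriv ?_
    symm
    have hsplit : (h z) ^ (-k) = (h z) ^ (-k - 1) * h z := by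
      rw [← Real.rpow_add_one (hpos z).ne' (-k - 1)]
      ring_nf
    rw [hsplit]
    have := hode z
    linear_combination (-(h z ^ (-k - 1))) * this
  have hgdiff : Differentiable ℝ g := fun z => ((hgd z).differentiableAt)
  have hgconst : ∀ z, g z = g 0 := fun z =>
    is_const_of_deriv_eq_zero hgdiff (fun x => (hgd x).deriv) z 0
  set c : ℝ := g 0 with hc
  have hcpos : 0 < c := by
    rw [hc, hg]
    exact mul_pos (hpos' 0) (Real.rpow_pos_of_pos (hpos 0) _)
  set u : ℝ → ℝ := fun z => (h z) ^ (1 - k) with hu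
  have hud : ∀ z, HasDerivAt u ((1 - k) * c) z := by
    intro z
    have hr : HasDerivAt u (deriv h z * (1 - k) * (h z) ^ (1 - k - 1)) z :=
      (hh z).rpow_const (Or.inl (hpos z).ne')
    convert hr using 1
    have : (1 : ℝ) - k - 1 = -k := by ring
    rw [this]
    have := hgconst z
    rw [hg] at this
    linear_combination (k - 1) * this
  -- F z = u z - (1-k)*c*z is constant
  set F : ℝ → ℝ := fun z => u z - (1 - k) * c * z with hF
  have hFd : ∀ z, HasDerivAt F 0 z := by
    intro z
    have := (hud z).sub (((hasDerivAt_id z).const_mul ((1 - k) * c)))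
    simp at this
    exact this
  have hFdiff : Differentiable ℝ F := fun z => (hFd z).differentiableAt
  have hFconst : ∀ z, F z = F 0 := fun z =>
    is_const_of_deriv_eq_zero hFdiff (fun x => (hFd x).deriv) z 0
  have huz : ∀ z, u z = u 0 + (1 - k) * c * z := by
    intro z
    have := hFconst z
    simp only [hF] at this
    linarith [this]
  have hne : (1 - k) * c ≠ 0 :=
    mul_ne_zero (sub_ne_zero.2 (Ne.symm hk)) hcpos.ne'
  set z0 : ℝ := -(u 0) / ((1 - k) * c) with hz0
  have : u z0 = 0 := by
    rw [huz z0, hz0]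
    field_simp
    ring
  have : (0:ℝ) < u z0 := Real.rpow_pos_of_pos (hpos z0) _
  linarith [this, ‹u z0 = 0›]
end

section
/- Let ψ : ℝ → ℝ be smooth with ψ^{(p+3)} > 0 and ψ^{(p+4)} > 0 everywhere, and suppose α²_ψ(z) := ψ^{(p+5)}(z)ψ^{(p+3)}(z)/(ψ^{(p+4)}(z))² is a constant function. Then there exist a, b > 0 with ψ^{(p+3)}(z) = a e^{bz} for all z ∈ ℝ. -/
/-- if ψ^{(p+3)} > 0 and ψ^{(p+4)} > 0 everywhere and
    α²_ψ = ψ^{(p+5)}ψ^{(p+3)}/(ψ^{(p+4)})² is constant, then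
    ψ^{(p+3)}(z) = a·e^{bz} for some a, b > 0. -/
theorem stmt_13 (p : ℕ) (ψ : ℝ → ℝ) (hψ : ContDiff ℝ (⊤ : ℕ∞) ψ)
    (hpos3 : ∀ z, 0 < iteratedDeriv (p+3) ψ z)
    (hpos4 : ∀ z, 0 < iteratedDeriv (p+4) ψ z)
    (hconst : ∃ c : ℝ, ∀ z,
      iteratedDeriv (p+5) ψ z * iteratedDeriv (p+3) ψ z / (iteratedDeriv (p+4) ψ z) ^ 2 = c) :
    ∃ a > (0:ℝ), ∃ b > (0:ℝ), ∀ z, iteratedDeriv (p+3) ψ z = a * Real.exp (b * z) := by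
  obtain ⟨c, hc⟩ := hconst
  set h := iteratedDeriv (p+3) ψ with hh
  set h4 := iteratedDeriv (p+4) ψ with hh4
  set h5 := iteratedDeriv (p+5) ψ with hh5
  have hlt : ∀ m : ℕ, (m : WithTop ℕ∞) < ((⊤ : ℕ∞) : WithTop ℕ∞) := fun m => by
    exact_mod_cast ENat.coe_lt_top m
  have hd3 : Differentiable ℝ h := hψ.differentiable_iteratedDeriv _ (hlt _)
  have hd4 : Differentiable ℝ h4 := hψ.differentiable_iteratedDeriv _ (hlt _)
  have e4 : deriv h = h4 := (iteratedDeriv_succ (n := p+3)).symm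
  have e5 : deriv h4 = h5 := by
    rw [hh4, hh5]
    exact (iteratedDeriv_succ (n := p+4)).symm
  -- key algebraic relation: h5 z * h z = c * (h4 z)^2
  have hrel : ∀ z, h5 z * h z = c * (h4 z) ^ 2 := by
    intro z
    have := hc z
    have h4ne : h4 z ≠ 0 := (hpos4 z).ne'
    field_simp at this
    linarith [this]
  -- derivative of v := h / h4 is 1 - c
  have hv : ∀ z, HasDerivAt (fun z => h z / h4 z) (1 - c) z := by
    intro z
    have H3 : HasDerivAt h (h4 z) z := by
      have := (hd3 z).hasDerivAt
      rwa [e4] at this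
    have H4 : HasDerivAt h4 (h5 z) z := by
      have := (hd4 z).hasDerivAt
      rwa [e5] at this
    have := H3.div H4 (hpos4 z).ne'
    refine this.congr_deriv ?_
    have h4ne : (h4 z) ≠ 0 := (hpos4 z).ne'
    rw [div_eq_iff (pow_ne_zero 2 h4ne)]
    nlinarith [hrel z]
  -- v is affine: v z = v 0 + (1 - c) * z
  have haff : ∀ z, h z / h4 z = h 0 / h4 0 + (1 - c) * z := by
    intro z
    have key : ∀ x y : ℝ, (fun z => h z / h4 z - (1 - c) * z) x
        = (fun z => h z / h4 z - (1 - c) * z) y := by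
      intro x y
      refine is_const_of_deriv_eq_zero (f := fun z => h z / h4 z - (1 - c) * z)
        (fun t => ((hv t).sub ((hasDerivAt_id t).const_mul (1 - c))).differentiableAt)
        (fun t => by
          have := ((hv t).sub ((hasDerivAt_id t).const_mul (1 - c)))
          exact this.deriv.trans (by simp)) x y
    have := key z 0
    simp only at this
    linarith
  -- positivity of v forces c = 1
  have hc1 : c = 1 := by
    by_contra hne
    have hden : (1 : ℝ) - c ≠ 0 := fun h0 => hne (by linarith)
    set z := (-(h 0 / h4 0) - 1) / (1 - c) with hz
    have := haff z
    have hvpos : 0 < h z / h4 z := div_pos (hpos3 z) (hpos4 z)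
    rw [this] at hvpos
    have hcancel : (1 - c) * z = -(h 0 / h4 0) - 1 := by
      rw [hz, mul_comm]
      exact div_mul_cancel₀ _ hden
    rw [hcancel] at hvpos
    linarith
  -- hence v is constant; set b = h4 0 / h 0
  set b := h4 0 / h 0 with hb
  have hbpos : 0 < b := div_pos (hpos4 0) (hpos3 0)
  have hODE : ∀ z, h4 z = b * h z := by
    intro z
    have := haff z
    rw [hc1] at this
    simp at this
    have h4ne : h4 z ≠ 0 := (hpos4 z).ne'
    have h4ne0 : h4 0 ≠ 0 := (hpos4 0).ne'
    have h0ne : h 0 ≠ 0 := (hpos3 0).ne'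
    rw [hb]
    field_simp
    field_simp at this
    nlinarith [this]
  -- solve ODE: h z = h 0 * exp (b z)
  refine ⟨h 0, hpos3 0, b, hbpos, fun z => ?_⟩
  have key : ∀ x y : ℝ, (fun z => h z * Real.exp (-(b * z))) x
      = (fun z => h z * Real.exp (-(b * z))) y := by
    intro x y
    refine is_const_of_deriv_eq_zero (f := fun z => h z * Real.exp (-(b * z)))
      (fun t => ((hd3 t).mul (by fun_prop))) (fun t => ?_) x y
    · 
      have H3 : HasDerivAt h (h4 t) t := by
        have := (hd3 t).hasDerivAt
        rwa [e4] at this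
      have He : HasDerivAt (fun z => Real.exp (-(b * z))) (-b * Real.exp (-(b * t))) t := by
        have := (Real.hasDerivAt_exp (-(b * t))).comp t
          (((hasDerivAt_id t).const_mul b).neg)
        refine this.congr_deriv ?_
        simp [mul_comm]
      have := H3.mul He
      have hz := this.deriv
      refine hz.trans ?_
      rw [hODE t]
      ring
  have := key z 0
  simp only at this
  rw [mul_zero, neg_zero, Real.exp_zero, mul_one] at this
  have h2 : h z * Real.exp (-(b * z)) * Real.exp (b * z) = h 0 * Real.exp (b * z) := by
    rw [this]
  rwa [mul_assoc, ← Real.exp_add, neg_add_cancel, Real.exp_zero, mul_one] at h2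
end

section
/- Let ψ₁, ψ₂ : ℝ → ℝ be real analytic with ψ_i^{(p+3)} > 0 and ψ_i^{(p+4)} > 0. If α^k_{ψ₁}(P₁) = α^k_{ψ₂}(P₂) for all k ≥ 2 (where α^k_ψ = ψ^{(k+p+3)}(ψ^{(p+3)})^{k-1}(ψ^{(p+4)})^{-k}), then all Taylor coefficients of ψ₁^{(p+3)} at z₁ := (z_0-coordinate of P₁) are determined, after rescaling z ↦ λz + μ with λ = ψ₁^{(p+3)}(z₁)/ψ₁^{(p+4)}(z₁) appropriately, by those of ψ₂^{(p+3)} at the corresponding point; in particular ψ₁^{(p+3)}(z₁ + λ₁ t)/ψ₁^{(p+3)}(z₁) = ψ₂^{(p+3)}(z₂ + λ₂ t)/ψ₂^{(p+3)}(z₂) for all t, where λ_i = ψ_i^{(p+3)}(z_i)/ψ_i^{(p+4)}(z_i). -/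
/-!
Write `F = ψ^{(p+3)}` and `λ = F(z) / F'(z)`, and normalize `F` at `z` to
`g(t) = F(z + λ t) / F(z)`. Then `g(0) = g'(0) = 1`, and for `k ≥ 2` the `k`-th derivative of
`g` at `0` is `λ^k F^{(k)}(z) / F(z) = α^k`. So equal invariants give the two normalized
functions the same Taylor series at `0`, and since both are analytic on the connected line
they coincide.
-/

section IdentityTheorem

variable {𝕜 E : Type*} [NontriviallyNormedField 𝕜] [NormedAddCommGroup E] [NormedSpace 𝕜 E]
  [CompleteSpace E]

theorem AnalyticAt.iteratedDeriv {f : 𝕜 → E} {x : 𝕜} (hf : AnalyticAt 𝕜 f x) (n : ℕ) :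
    AnalyticAt 𝕜 (iteratedDeriv n f) x := by
  induction n with
  | zero => simpa using hf
  | succ n ih => simpa only [iteratedDeriv_succ] using ih.deriv

theorem eq_of_forall_iteratedDeriv_eq [CharZero 𝕜] [PreconnectedSpace 𝕜] {f g : 𝕜 → E}
    (hf : ∀ z, AnalyticAt 𝕜 f z) (hg : ∀ z, AnalyticAt 𝕜 g z) (z₀ : 𝕜)
    (h : ∀ n, iteratedDeriv n f z₀ = iteratedDeriv n g z₀) : f = g := by
  have hfg : ∀ z, AnalyticAt 𝕜 (f - g) z := fun z => (hf z).sub (hg z)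
  have horder : analyticOrderAt (f - g) z₀ = ⊤ := by
    refine ENat.eq_top_iff_forall_ge.2 fun n =>
      (natCast_le_analyticOrderAt_iff_iteratedDeriv_eq_zero (hfg z₀)).2 fun i _ => ?_
    rw [iteratedDeriv_sub (hf z₀).contDiffAt (hg z₀).contDiffAt, h i, sub_self]
  exact sub_eq_zero.1 ((AnalyticOnNhd.analyticOrderAt_eq_top_iff_eq_zero z₀ hfg).1 horder)

end IdentityTheorem

section NormalizedRescaling

variable {𝕜 : Type*} [NontriviallyNormedField 𝕜]

theorem iteratedDeriv_iteratedDeriv (m n : ℕ) (f : 𝕜 → 𝕜) :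
    iteratedDeriv m (iteratedDeriv n f) = iteratedDeriv (m + n) f := by
  simp only [iteratedDeriv_eq_iterate, Function.iterate_add_apply]

theorem iteratedDeriv_comp_affine {n : ℕ} {F : 𝕜 → 𝕜} (hF : ContDiff 𝕜 n F) (z L x : 𝕜) :
    iteratedDeriv n (fun t => F (z + L * t)) x = L ^ n * iteratedDeriv n F (z + L * x) := by
  have hshift : ContDiff 𝕜 n (fun s => F (z + s)) := hF.comp (contDiff_const.add contDiff_id)
  rw [iteratedDeriv_comp_const_mul hshift L, iteratedDeriv_comp_const_add]

noncomputable def normalizedRescaling (F : 𝕜 → 𝕜) (z : 𝕜) : 𝕜 → 𝕜 :=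
  fun t => F (z + F z / deriv F z * t) / F z

/-- The paper's `α^k`, for `F = ψ^{(p+3)}`. -/
noncomputable def affineInvariant (F : 𝕜 → 𝕜) (z : 𝕜) (k : ℕ) : 𝕜 :=
  iteratedDeriv k F z * F z ^ (k - 1) / deriv F z ^ k

theorem affineInvariant_one {F : 𝕜 → 𝕜} {z : 𝕜} (h : deriv F z ≠ 0) :
    affineInvariant F z 1 = 1 := by
  simp [affineInvariant, h]

theorem analyticAt_normalizedRescaling {F : 𝕜 → 𝕜} (hF : ∀ z, AnalyticAt 𝕜 F z) (z t : 𝕜) :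
    AnalyticAt 𝕜 (normalizedRescaling F z) t := by
  unfold normalizedRescaling
  fun_prop

theorem iteratedDeriv_normalizedRescaling_zero {F : 𝕜 → 𝕜} {z : 𝕜} (hz : F z ≠ 0) :
    iteratedDeriv 0 (normalizedRescaling F z) 0 = 1 := by
  simp [normalizedRescaling, hz]

theorem iteratedDeriv_normalizedRescaling {k : ℕ} {F : 𝕜 → 𝕜} (hF : ContDiff 𝕜 k F) {z : 𝕜}
    (hz : F z ≠ 0) (hk : 1 ≤ k) :
    iteratedDeriv k (normalizedRescaling F z) 0 = affineInvariant F z k := by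
  obtain ⟨j, rfl⟩ := Nat.exists_eq_add_of_le' hk
  unfold normalizedRescaling
  simp only [iteratedDeriv_div_const, iteratedDeriv_comp_affine hF, mul_zero, add_zero,
    affineInvariant, Nat.add_sub_cancel]
  field_simp
  ring

theorem normalizedRescaling_eq_of_affineInvariant_eq [CharZero 𝕜] [CompleteSpace 𝕜]
    [PreconnectedSpace 𝕜] {F G : 𝕜 → 𝕜} (hF : ∀ z, AnalyticAt 𝕜 F z)
    (hG : ∀ z, AnalyticAt 𝕜 G z) {z w : 𝕜} (hFz : F z ≠ 0) (hF'z : deriv F z ≠ 0)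
    (hGw : G w ≠ 0) (hG'w : deriv G w ≠ 0)
    (hα : ∀ k, 2 ≤ k → affineInvariant F z k = affineInvariant G w k) :
    normalizedRescaling F z = normalizedRescaling G w := by
  have hFcd (k : ℕ) : ContDiff 𝕜 k F := contDiff_iff_contDiffAt.2 fun x => (hF x).contDiffAt
  have hGcd (k : ℕ) : ContDiff 𝕜 k G := contDiff_iff_contDiffAt.2 fun x => (hG x).contDiffAt
  refine eq_of_forall_iteratedDeriv_eq (analyticAt_normalizedRescaling hF z)
    (analyticAt_normalizedRescaling hG w) 0 fun k => ?_
  rcases k with _ | _ | k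
  · rw [iteratedDeriv_normalizedRescaling_zero hFz, iteratedDeriv_normalizedRescaling_zero hGw]
  · rw [iteratedDeriv_normalizedRescaling (hFcd 1) hFz le_rfl,
      iteratedDeriv_normalizedRescaling (hGcd 1) hGw le_rfl, affineInvariant_one hF'z,
      affineInvariant_one hG'w]
  · rw [iteratedDeriv_normalizedRescaling (hFcd _) hFz (by omega),
      iteratedDeriv_normalizedRescaling (hGcd _) hGw (by omega), hα _ (by omega)]

end NormalizedRescaling

/-- if ψ₁, ψ₂ are real analytic with ψ_i^{(p+3)}, ψ_i^{(p+4)} > 0 and the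
    affine invariants α^k agree, α^k_{ψ₁}(z₁) = α^k_{ψ₂}(z₂) for all k ≥ 2, then the
    normalized rescaled functions agree:
    ψ₁^{(p+3)}(z₁+λ₁t)/ψ₁^{(p+3)}(z₁) = ψ₂^{(p+3)}(z₂+λ₂t)/ψ₂^{(p+3)}(z₂) for all t,
    where λᵢ = ψᵢ^{(p+3)}(zᵢ)/ψᵢ^{(p+4)}(zᵢ). -/
theorem stmt_14 (p : ℕ) (ψ₁ ψ₂ : ℝ → ℝ)
    (han1 : ∀ z, AnalyticAt ℝ ψ₁ z) (han2 : ∀ z, AnalyticAt ℝ ψ₂ z)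
    (hpos13 : ∀ z, 0 < iteratedDeriv (p+3) ψ₁ z)
    (hpos14 : ∀ z, 0 < iteratedDeriv (p+4) ψ₁ z)
    (hpos23 : ∀ z, 0 < iteratedDeriv (p+3) ψ₂ z)
    (hpos24 : ∀ z, 0 < iteratedDeriv (p+4) ψ₂ z)
    (z₁ z₂ : ℝ)
    (hα : ∀ k : ℕ, 2 ≤ k →
      iteratedDeriv (k+p+3) ψ₁ z₁ * (iteratedDeriv (p+3) ψ₁ z₁) ^ (k-1)
          / (iteratedDeriv (p+4) ψ₁ z₁) ^ k
        = iteratedDeriv (k+p+3) ψ₂ z₂ * (iteratedDeriv (p+3) ψ₂ z₂) ^ (k-1)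
          / (iteratedDeriv (p+4) ψ₂ z₂) ^ k) :
    ∀ t : ℝ,
      iteratedDeriv (p+3) ψ₁ (z₁ + (iteratedDeriv (p+3) ψ₁ z₁ / iteratedDeriv (p+4) ψ₁ z₁) * t)
          / iteratedDeriv (p+3) ψ₁ z₁
        = iteratedDeriv (p+3) ψ₂ (z₂ + (iteratedDeriv (p+3) ψ₂ z₂ / iteratedDeriv (p+4) ψ₂ z₂) * t)
          / iteratedDeriv (p+3) ψ₂ z₂ := by
  have hderiv (ψ : ℝ → ℝ) : iteratedDeriv (p+4) ψ = deriv (iteratedDeriv (p+3) ψ) :=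
    iteratedDeriv_succ
  have hinv (ψ : ℝ → ℝ) (z : ℝ) (k : ℕ) : affineInvariant (iteratedDeriv (p+3) ψ) z k =
      iteratedDeriv (k+p+3) ψ z * (iteratedDeriv (p+3) ψ z) ^ (k-1)
        / (iteratedDeriv (p+4) ψ z) ^ k := by
    rw [affineInvariant, iteratedDeriv_iteratedDeriv, hderiv, add_assoc]
  have hrescaled := normalizedRescaling_eq_of_affineInvariant_eq
    (fun z => (han1 z).iteratedDeriv (p+3)) (fun z => (han2 z).iteratedDeriv (p+3))
    (hpos13 z₁).ne' (hderiv ψ₁ ▸ (hpos14 z₁).ne') (hpos23 z₂).ne' (hderiv ψ₂ ▸ (hpos24 z₂).ne')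
    fun k hk => by rw [hinv, hinv]; exact hα k hk
  intro t
  simpa only [normalizedRescaling, hderiv] using congrFun hrescaled t
end

section
/- Let ψ(z) = e^z + e^{2z}. Then h := ψ^{(p+3)} satisfies h > 0, h' > 0 everywhere, and α²_ψ(z) = h''(z)h(z)/(h'(z))² is a non-constant function of z. Consequently h is not of the form a e^{bz}. -/
open Real

/-! With `A = 2 ^ (p + 3)` we have `h = e^z + A e^{2z}`, `h' = e^z + 2A e^{2z}` and
`h'' = e^z + 4A e^{2z}`. Putting `t = A e^z`, the ratio `α² = h'' h / h'^2` becomes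
`(1 + 4t)(1 + t) / (1 + 2t)^2 = 1 + t / (1 + 2t)^2`, which is `10/9` at `t = 1` and `27/25` at
`t = 2`. For `a e^{bz}`, instead, `α²` is constant because the factor `e^{2bz}` cancels. -/

noncomputable def curvatureRatio (h : ℝ → ℝ) (z : ℝ) : ℝ :=
  deriv (deriv h) z * h z / deriv h z ^ 2

lemma deriv_const_mul_exp_mul (a b : ℝ) :
    deriv (fun z => a * exp (b * z)) = fun z => a * b * exp (b * z) := by
  funext z
  rw [deriv_const_mul_field, ← iteratedDeriv_one, iteratedDeriv_exp_const_mul, pow_one, mul_assoc]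

lemma exists_curvatureRatio_const_mul_exp_mul_eq (a b : ℝ) :
    ∃ c, ∀ z, curvatureRatio (fun z => a * exp (b * z)) z = c := by
  -- `1`, or `0` when `a * b = 0` and `deriv h` vanishes
  refine ⟨(a * b) ^ 2 / (a * b) ^ 2, fun z => ?_⟩
  have hE : exp (b * z) ^ 2 ≠ 0 := by positivity
  calc _ = (a * b) ^ 2 * exp (b * z) ^ 2 / ((a * b) ^ 2 * exp (b * z) ^ 2) := by
        rw [curvatureRatio, deriv_const_mul_exp_mul, deriv_const_mul_exp_mul]; ring
    _ = _ := mul_div_mul_right _ _ hE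

lemma iteratedDeriv_exp_add_exp_two_mul (n : ℕ) :
    iteratedDeriv n (fun z => exp z + exp (2 * z)) = fun z => exp z + 2 ^ n * exp (2 * z) := by
  funext z
  rw [iteratedDeriv_fun_add (by fun_prop) (by fun_prop), iteratedDeriv_exp_const_mul,
    iteratedDeriv_eq_iterate, iter_deriv_exp]

lemma deriv_iteratedDeriv_exp_add_exp_two_mul (n : ℕ) :
    deriv (iteratedDeriv n (fun z => exp z + exp (2 * z)))
      = fun z => exp z + 2 ^ (n + 1) * exp (2 * z) := by
  rw [← iteratedDeriv_succ, iteratedDeriv_exp_add_exp_two_mul]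

lemma curvatureRatio_iteratedDeriv_exp_add_exp_two_mul (n : ℕ) (z : ℝ) :
    curvatureRatio (iteratedDeriv n (fun z => exp z + exp (2 * z))) z
      = 1 + 2 ^ n * exp z / (1 + 2 * (2 ^ n * exp z)) ^ 2 := by
  rw [curvatureRatio, ← iteratedDeriv_succ, deriv_iteratedDeriv_exp_add_exp_two_mul,
    iteratedDeriv_exp_add_exp_two_mul, iteratedDeriv_exp_add_exp_two_mul]
  simp only [two_mul z, exp_add, pow_succ]
  field_simp
  ring

lemma exists_two_pow_mul_exp_eq (n : ℕ) {t : ℝ} (ht : 0 < t) : ∃ z, 2 ^ n * exp z = t :=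
  ⟨log (t / 2 ^ n), by rw [exp_log (by positivity)]; field_simp⟩

lemma not_exists_curvatureRatio_iteratedDeriv_exp_add_exp_two_mul_eq (n : ℕ) :
    ¬∃ c, ∀ z, curvatureRatio (iteratedDeriv n (fun z => exp z + exp (2 * z))) z = c := by
  rintro ⟨c, hc⟩
  obtain ⟨z₁, hz₁⟩ := exists_two_pow_mul_exp_eq n one_pos
  obtain ⟨z₂, hz₂⟩ := exists_two_pow_mul_exp_eq n two_pos
  have h₁ := hc z₁
  have h₂ := hc z₂
  rw [curvatureRatio_iteratedDeriv_exp_add_exp_two_mul, hz₁] at h₁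
  rw [curvatureRatio_iteratedDeriv_exp_add_exp_two_mul, hz₂] at h₂
  rw [← h₂] at h₁
  norm_num at h₁

/-- for ψ(z) = e^z + e^{2z}, the function h = ψ^{(p+3)} satisfies h > 0
    and h' > 0 everywhere, but α²_ψ = h''h/(h')² is non-constant; consequently h is not
    of the form a·e^{bz}.  (This is the example showing N_{6+4p,e^z+e^{2z}} is
    (p+2)-curvature homogeneous but not affine homogeneous.) -/
theorem stmt_19 (p : ℕ) :
    let ψ : ℝ → ℝ := fun z => Real.exp z + Real.exp (2 * z)
    let h : ℝ → ℝ := iteratedDeriv (p+3) ψ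
    (∀ z, 0 < h z)
    ∧ (∀ z, 0 < deriv h z)
    ∧ ¬(∃ c : ℝ, ∀ z, deriv (deriv h) z * h z / (deriv h z) ^ 2 = c)
    ∧ ¬(∃ a b : ℝ, ∀ z, h z = a * Real.exp (b * z)) := by
  intro ψ h
  have not_const : ¬∃ c, ∀ z, curvatureRatio h z = c :=
    not_exists_curvatureRatio_iteratedDeriv_exp_add_exp_two_mul_eq (p + 3)
  refine ⟨fun z => ?_, fun z => ?_, not_const, ?_⟩
  · simp only [h, ψ, iteratedDeriv_exp_add_exp_two_mul]; positivity
  · simp only [h, ψ, deriv_iteratedDeriv_exp_add_exp_two_mul]; positivity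
  · rintro ⟨a, b, hab⟩
    rw [show h = fun z => a * exp (b * z) from funext hab] at not_const
    exact not_const (exists_curvatureRatio_const_mul_exp_mul_eq a b)
end
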